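/- Let N ≥ 1 and let κ_N be a kernel on S with κ_N(r,s) ≤ N for all r, s ∈ S. Fix r ∈ S, k ∈ ℕ₀^S with k_r ≥ 1, and m ∈ ℕ₀^S with k ≤ m componentwise. Then p_N(k) · ∏_{s∈S} C(m_s − δ_{r,s}, k_s − δ_{r,s}) · ∏_{s,s̃ ∈ S} (1 − κ_N(s,s̃)/N)^{k_s (m_{s̃} − k_{s̃})} ≤ 1, where δ_{r,s} is the Kronecker delta and C(·,·) denotes the binomial coefficient. -/

import Mathlib

open scoped Classical ENNReal
open Filter MeasureTheory

noncomputable section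

/-- The set of ordered pairs `(i,j)` of vertices with `i < j`, representing the
potential edges of a graph on `Fin n`. -/
def upperPairs (n : ℕ) : Finset (Fin n × Fin n) :=
  Finset.univ.filter fun q => q.1 < q.2

/-- The simple graph on `Fin n` determined by a finite set of (ordered) edges. -/
def graphOf {n : ℕ} (E : Finset (Fin n × Fin n)) : SimpleGraph (Fin n) :=
  SimpleGraph.fromRel fun i j => (i, j) ∈ E

/-- `PConn n x p` is the probability that the inhomogeneous random graph `G(n, x, p)`,
with type vector `x` and independent edges where `{i,j}` is present with probability
`p (x i) (x j)`, is connected; written as a finite sum over connected graphs. -/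
def PConn {S : Type*} (n : ℕ) (x : Fin n → S) (p : S → S → ℝ) : ℝ :=
  ∑ E ∈ (upperPairs n).powerset.filter (fun E => (graphOf E).Connected),
    (∏ q ∈ E, p (x q.1) (x q.2)) * ∏ q ∈ upperPairs n \ E, (1 - p (x q.1) (x q.2))

/-- Sum over all spanning trees (connected graphs with `n - 1` edges) on `Fin n` of the
product of the kernel over the edges. -/
def treeWeight {S : Type*} (n : ℕ) (x : Fin n → S) (κ : S → S → ℝ) : ℝ :=
  ∑ E ∈ (upperPairs n).powerset.filter
      (fun E => (graphOf E).Connected ∧ E.card + 1 = n),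
    ∏ q ∈ E, κ (x q.1) (x q.2)

/-- A canonical list of types compatible with the multiplicity vector `k`. -/
def compatList {S : Type*} [Fintype S] (k : S → ℕ) : List S :=
  (∑ s : S, (k s) • ({s} : Multiset S)).toList

lemma compatList_length {S : Type*} [Fintype S] (k : S → ℕ) :
    (compatList k).length = ∑ s : S, k s := by
  simp [compatList]

/-- A canonical type vector compatible with `k`, i.e. with `∑ i δ_{x i} = k`. -/
def compatVec {S : Type*} [Fintype S] (k : S → ℕ) : Fin (∑ s : S, k s) → S :=
  fun i => (compatList k).get (Fin.cast (compatList_length k).symm i)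

/-- `tau κ k` is the spanning-tree weight `τ(k; κ)`. -/
def tau {S : Type*} [Fintype S] (κ : S → S → ℝ) (k : S → ℕ) : ℝ :=
  treeWeight (∑ s : S, k s) (compatVec k) κ

/-- `pN κN N k` is the probability that the inhomogeneous random graph on a vertex set
with type composition `k` and edge probabilities `min 1 (κN/N)` is connected. -/
def pN {S : Type*} [Fintype S] (κN : S → S → ℝ) (N : ℕ) (k : S → ℕ) : ℝ :=
  PConn (∑ s : S, k s) (compatVec k) fun r s => min 1 (κN r s / N)

/-- Extended-real logarithm, with `elog x = -∞` for `x ≤ 0`. -/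
def elog (x : ℝ) : EReal := if x ≤ 0 then (⊥ : EReal) else ((Real.log x : ℝ) : EReal)

/-- The nonnegative part of `-log u`, equal to `∞` if `u ≤ 0`. -/
def negLogPart (u : ℝ) : ℝ≥0∞ := if u ≤ 0 then ⊤ else ENNReal.ofReal (-Real.log u)

/-- The relative-entropy summand `x log (x / d)` with conventions `0 log 0 = 0` and
`x log (x/0) = +∞` for `x ≠ 0`. -/
def entTerm (x d : ℝ) : EReal :=
  if x = 0 then (0 : EReal) else if d ≤ 0 then (⊤ : EReal)
  else ((x * Real.log (x / d) : ℝ) : EReal)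

/-- `‖κ‖_∞ = max_{r,s} κ r s`. -/
def kernelSup {S : Type*} [Fintype S] [Nonempty S] (κ : S → S → ℝ) : ℝ :=
  Finset.univ.sup' Finset.univ_nonempty fun r =>
    Finset.univ.sup' Finset.univ_nonempty fun s => κ r s

/-- `Σ(κ, ν)`, the `ℓ²(ν)`-operator norm of the matrix `(κ r s * ν s)_{r,s}`. -/
def sigmaOp {S : Type*} [Fintype S] (κ : S → S → ℝ) (ν : S → ℝ) : ℝ :=
  sSup { t : ℝ | ∃ f : S → ℝ, (∀ s, 0 ≤ f s) ∧ (∑ r : S, ν r * f r ^ 2) ≤ 1 ∧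
    t = Real.sqrt (∑ r : S, ν r * (∑ s : S, κ r s * f s * ν s) ^ 2) }

/-- Irreducibility of the kernel `κ` with respect to `ν`. -/
def Irred {S : Type*} (κ : S → S → ℝ) (ν : S → ℝ) : Prop :=
  ∀ A : Set S, (∀ r ∈ A, ∀ s, s ∉ A → 0 < ν r → 0 < ν s → κ r s = 0) →
    (∀ r ∈ A, ν r = 0) ∨ (∀ s, s ∉ A → ν s = 0)

/-- The generating series `Γ_r(θ) = ∑_k τ(k) k_r ∏_s θ_s^{k_s}/k_s! ∈ [0,∞]`. -/
def Gamma0 {S : Type*} [Fintype S] (κ : S → S → ℝ) (θ : S → ℝ) (r : S) : ℝ≥0∞ :=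
  ∑' k : S → ℕ,
    ENNReal.ofReal (tau κ k * (k r : ℝ) * ∏ s : S, θ s ^ (k s) / (Nat.factorial (k s) : ℝ))

/-- `χ(κ, θ)`: the infimum over probability vectors `w ≪ θ` of
`∑_r w_r log (w_r / ((κ w)_r θ_r))`. -/
def chiFn {S : Type*} [Fintype S] (κ : S → S → ℝ) (θ : S → ℝ) : EReal :=
  sInf { v : EReal | ∃ w : S → ℝ, (∀ r, 0 ≤ w r) ∧ ((∑ r : S, w r) = 1) ∧
    (∀ r, θ r = 0 → w r = 0) ∧
    v = ∑ r : S, entTerm (w r) ((∑ s : S, κ r s * w s) * θ r) }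

/-- `Δ_r(k)`: the sum over directed spanning trees of the support of `k` rooted at `r`
(encoded as parent maps `f`, edges `(f s, s)` directed away from the root) of
`∏ κ(f s, s) * k (f s)`. -/
def Delta {S : Type*} [Fintype S] [DecidableEq S] (κ : S → S → ℝ) (k : S → ℕ) (r : S) : ℝ :=
  ∑ f ∈ (Finset.univ : Finset (S → S)).filter (fun f =>
      (∀ s, (s = r ∨ k s = 0) → f s = s) ∧
      ∀ s, 0 < k s → s ≠ r → (0 < k (f s) ∧ ∃ n, f^[n] s = r)),
    ∏ s ∈ Finset.univ.filter (fun s => 0 < k s ∧ s ≠ r), (κ (f s) s * (k (f s) : ℝ))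

/-- The reference weight `τ(k) ∏_s μ_s^{k_s}/k_s!`. -/
def rhoMu {S : Type*} [Fintype S] (κ : S → S → ℝ) (μ : S → ℝ) (k : S → ℕ) : ℝ :=
  tau κ k * ∏ s : S, μ s ^ (k s) / (Nat.factorial (k s) : ℝ)

/-- The microscopic rate function `I_Mi`. -/
def IMi {S : Type*} [Fintype S] (κ : S → S → ℝ) (μ : S → ℝ) (lam : (S → ℕ) → ℝ) : EReal :=
  (∑' k : S → ℕ, entTerm (lam k) (rhoMu κ μ k))
  + ((∑' k : S → ℕ, lam k * (((∑ s : S, k s : ℕ) : ℝ) - 1) : ℝ) : EReal)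
  + ((((1 : ℝ)/2) * ∑ r : S, ∑ s : S, (∑' k : S → ℕ, lam k * (k r : ℝ)) * κ r s * μ s : ℝ) : EReal)

/-- The minimizer candidate `λ_k(c) = τ(k) ∏_s (c_s e^{-(κ c)_s})^{k_s}/k_s!`. -/
def lamC {S : Type*} [Fintype S] (κ : S → S → ℝ) (c : S → ℝ) (k : S → ℕ) : ℝ :=
  tau κ k * ∏ s : S, (c s * Real.exp (-(∑ t : S, κ s t * c t))) ^ (k s) / (Nat.factorial (k s) : ℝ)

/-- The mesoscopic rate function `I_Me`. -/
def IMe {S : Type*} [Fintype S] (κ : S → S → ℝ) (μ ν : S → ℝ) : EReal :=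
  (∑ r : S, entTerm (ν r) ((∑ s : S, κ r s * ν s) * μ r))
  + ((((1 : ℝ)/2) * ∑ r : S, ∑ s : S, ν r * κ r s * μ s : ℝ) : EReal)

/-- `b` is a solution of the fixed-point system for `c`:
`b ∈ [0,∞)^S`, `b ≤ c` and `(κ(c-b))_r b_r = c_r - b_r` for all `r`. -/
def IsFPSol {S : Type*} [Fintype S] (κ : S → S → ℝ) (c b : S → ℝ) : Prop :=
  (∀ r, 0 ≤ b r) ∧ (∀ r, b r ≤ c r) ∧
    ∀ r, (∑ s : S, κ r s * (c s - b s)) * b r = c r - b r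

/-- The macroscopic rate summand `f_Ma`. -/
def fMa {S : Type*} [Fintype S] (κ : S → S → ℝ) (μ y : S → ℝ) : EReal :=
  (∑ r : S, entTerm (y r) ((1 - Real.exp (-(∑ s : S, κ r s * y s))) * μ r))
  + ((((1 : ℝ)/2) * ∑ r : S, ∑ s : S, y r * κ r s * (μ s - y s) : ℝ) : EReal)

/-- The functional `G_c(b)`. -/
def Gc {S : Type*} [Fintype S] (κ : S → S → ℝ) (μ c b : S → ℝ) : EReal :=
  (((∑ r : S, b r * Real.log (b r / μ r))
      - (1/2) * ∑ r : S, ∑ s : S, b r * κ r s * b s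
      + (1/2) * ∑ r : S, ∑ s : S, c r * κ r s * μ s : ℝ) : EReal)
  + ∑ r : S, entTerm (c r - b r) ((∑ s : S, κ r s * (c s - b s)) * μ r)

/-- `λ_k(t) = t^{|k|-1} τ(k) e^{-t⟨k,κμ⟩} ∏_r μ_r^{k_r}/k_r!`. -/
def lamT {S : Type*} [Fintype S] (κ : S → S → ℝ) (μ : S → ℝ) (k : S → ℕ) (t : ℝ) : ℝ :=
  t ^ ((∑ s : S, k s) - 1) * tau κ k *
    Real.exp (-t * ∑ r : S, ∑ s : S, (k r : ℝ) * κ r s * μ s) *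
    ∏ r : S, μ r ^ (k r) / (Nat.factorial (k r) : ℝ)


/-! Put `M = |m|` vertices with type vector `y` compatible with `m` into the random graph
`G(M, y, κ_N/N)` and fix a vertex `v₀` of type `r`. For each vertex set `A ∋ v₀` of type
composition `k`, the edge sets in which the component of `v₀` is exactly `A` include all unions
of a connected graph on `A` with an arbitrary graph outside `A`; their total weight is
`P_conn(A)` times the probability `∏ (1 - κ_N/N)^{k_s (m_t - k_t)}` that no edge leaves `A`.
These events are disjoint for different `A`, and there are `∏ C(m_s - δ_{rs}, k_s - δ_{rs})`
such sets `A`, so the left-hand side is at most the total probability `1`. -/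

open Finset

lemma card_filter_compatVec_eq {S : Type*} [Fintype S] [DecidableEq S] (k : S → ℕ) (s : S) :
    #{i | compatVec k i = s} = k s := by
  have hmap : Multiset.map (compatVec k) univ.val = (compatList k : Multiset S) := by
    rw [Fin.univ_val_map]
    have hofFn : ∀ (l : List S) (n : ℕ) (h : l.length = n),
        List.ofFn (fun i : Fin n => l.get (Fin.cast h.symm i)) = l := by
      intro l n h; subst h; simp
    exact_mod_cast congrArg _ (hofFn _ _ (compatList_length k))
  have hcount : Multiset.count s (compatList k : Multiset S) = k s := by
    simp [compatList, Multiset.count_sum', Multiset.count_singleton]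
  rw [← hmap, Multiset.count_map] at hcount
  rw [← hcount, card_def, filter_val]
  exact congrArg _ (Multiset.filter_congr fun _ _ => eq_comm)

lemma prod_comp_eq_prod_pow_card_filter {ι S M : Type*} [Fintype S] [DecidableEq S]
    [CommMonoid M] (B : Finset ι) (f : ι → S) (h : S → M) :
    ∏ j ∈ B, h (f j) = ∏ t, h t ^ #{j ∈ B | f j = t} := by
  rw [← prod_fiberwise B f]
  refine prod_congr rfl fun t _ => ?_
  rw [prod_congr rfl fun j hj => congrArg h (mem_filter.1 hj).2, prod_const]

section EdgeWeight

variable {α : Type*} [DecidableEq α]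

-- The probability that keeping each `q ∈ T` independently with probability `f q` yields `F`.
def edgeWeight (T : Finset α) (f : α → ℝ) (F : Finset α) : ℝ :=
  ∏ q ∈ T, if q ∈ F then f q else 1 - f q

lemma edgeWeight_eq_prod_mul_prod {T F : Finset α} (f : α → ℝ) (hF : F ⊆ T) :
    edgeWeight T f F = (∏ q ∈ F, f q) * ∏ q ∈ T \ F, (1 - f q) := by
  rw [edgeWeight, prod_ite, filter_mem_eq_inter, inter_eq_right.2 hF, filter_notMem_eq_sdiff]

lemma sum_edgeWeight_powerset (T : Finset α) (f : α → ℝ) :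
    ∑ F ∈ T.powerset, edgeWeight T f F = 1 := by
  rw [← sum_congr rfl fun F hF => (edgeWeight_eq_prod_mul_prod f (mem_powerset.1 hF)).symm,
    ← prod_add]
  simp

lemma edgeWeight_nonneg {f : α → ℝ} (hf0 : ∀ q, 0 ≤ f q) (hf1 : ∀ q, f q ≤ 1)
    (T F : Finset α) : 0 ≤ edgeWeight T f F :=
  prod_nonneg fun q _ => by split_ifs <;> linarith [hf0 q, hf1 q]

lemma edgeWeight_congr {T F F' : Finset α} (f : α → ℝ) (h : ∀ q ∈ T, q ∈ F ↔ q ∈ F') :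
    edgeWeight T f F = edgeWeight T f F' :=
  prod_congr rfl fun q hq => by simp only [h q hq]

lemma edgeWeight_image {β : Type*} [DecidableEq β] {φ : α → β} {T E : Finset α}
    (hφ : Set.InjOn φ T) (hE : E ⊆ T) (f : β → ℝ) :
    edgeWeight (T.image φ) f (E.image φ) = edgeWeight T (f ∘ φ) E := by
  rw [edgeWeight, prod_image hφ]
  refine prod_congr rfl fun q hq => ?_
  have hmem : φ q ∈ E.image φ ↔ q ∈ E :=
    ⟨fun h => by
      obtain ⟨q', hq', he⟩ := mem_image.1 h
      exact hφ (hE hq') hq he ▸ hq', mem_image_of_mem φ⟩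
  simp only [hmem, Function.comp]

end EdgeWeight

lemma mem_upperPairs {n : ℕ} {q : Fin n × Fin n} : q ∈ upperPairs n ↔ q.1 < q.2 := by
  simp [upperPairs]

section Pairs

variable {n M : ℕ}

def sortPair (q : Fin M × Fin M) : Fin M × Fin M := if q.1 < q.2 then q else q.swap

lemma sortPair_eq_or_eq_swap (q : Fin M × Fin M) : sortPair q = q ∨ sortPair q = q.swap := by
  unfold sortPair; split <;> simp

lemma sortPair_mem_upperPairs {q : Fin M × Fin M} (h : q.1 ≠ q.2) : sortPair q ∈ upperPairs M := by
  unfold sortPair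
  rcases lt_or_gt_of_ne h with h1 | h1
  · simp [mem_upperPairs, h1]
  · simp [mem_upperPairs, not_lt_of_gt h1, h1]

lemma sortPair_of_mem_upperPairs {q : Fin M × Fin M} (h : q ∈ upperPairs M) : sortPair q = q :=
  if_pos (mem_upperPairs.1 h)

def pushPair (e : Fin n → Fin M) (q : Fin n × Fin n) : Fin M × Fin M :=
  sortPair (e q.1, e q.2)

lemma pushPair_injOn {e : Fin n → Fin M} (he : Function.Injective e) :
    Set.InjOn (pushPair e) (upperPairs n) := by
  intro q hq q' hq' h
  rw [mem_coe, mem_upperPairs] at hq hq'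
  rcases sortPair_eq_or_eq_swap (e q.1, e q.2) with h1 | h1 <;>
    rcases sortPair_eq_or_eq_swap (e q'.1, e q'.2) with h2 | h2 <;>
    simp only [pushPair, h1, h2, Prod.swap, Prod.ext_iff, he.eq_iff] at h
  · exact Prod.ext h.1 h.2
  · exact absurd (h.1 ▸ h.2 ▸ hq') (lt_asymm hq)
  · exact absurd (h.1 ▸ h.2 ▸ hq') (lt_asymm hq)
  · exact Prod.ext h.2 h.1

def innerPairs (A : Finset (Fin M)) : Finset (Fin M × Fin M) :=
  {q ∈ upperPairs M | q.1 ∈ A ∧ q.2 ∈ A}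

def crossPairs (A : Finset (Fin M)) : Finset (Fin M × Fin M) :=
  {q ∈ upperPairs M | (q.1 ∈ A ↔ q.2 ∉ A)}

def outerPairs (A : Finset (Fin M)) : Finset (Fin M × Fin M) :=
  {q ∈ upperPairs M | q.1 ∉ A ∧ q.2 ∉ A}

lemma prod_upperPairs_eq {β : Type*} [CommMonoid β] (A : Finset (Fin M)) (g : Fin M × Fin M → β) :
    ∏ q ∈ upperPairs M, g q =
      (∏ q ∈ innerPairs A, g q) * (∏ q ∈ crossPairs A, g q) * ∏ q ∈ outerPairs A, g q := by
  have hunion : upperPairs M = innerPairs A ∪ crossPairs A ∪ outerPairs A := by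
    ext q; simp only [innerPairs, crossPairs, outerPairs, mem_union, mem_filter]; tauto
  have hic : Disjoint (innerPairs A) (crossPairs A) := disjoint_filter.2 fun _ _ => by tauto
  have hio : Disjoint (innerPairs A) (outerPairs A) := disjoint_filter.2 fun _ _ => by tauto
  have hco : Disjoint (crossPairs A) (outerPairs A) := disjoint_filter.2 fun _ _ => by tauto
  rw [hunion, prod_union (disjoint_union_left.2 ⟨hio, hco⟩), prod_union hic]

lemma image_pushPair_upperPairs {e : Fin n → Fin M} (he : Function.Injective e) :
    (upperPairs n).image (pushPair e) = innerPairs (univ.image e) := by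
  ext q
  simp only [mem_image, innerPairs, mem_filter, mem_univ, true_and]
  constructor
  · rintro ⟨q', hq', rfl⟩
    have hne : e q'.1 ≠ e q'.2 := he.ne (ne_of_lt (mem_upperPairs.1 hq'))
    refine ⟨sortPair_mem_upperPairs hne, ?_⟩
    rcases sortPair_eq_or_eq_swap (e q'.1, e q'.2) with h | h <;>
      simp [pushPair, h]
  · rintro ⟨hq, ⟨i, hi⟩, ⟨j, hj⟩⟩
    have hlt := mem_upperPairs.1 hq
    rcases lt_or_gt_of_ne (fun hij : i = j => hlt.ne (by rw [← hi, ← hj, hij])) with hij | hij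
    · exact ⟨(i, j), mem_upperPairs.2 hij, by simp [pushPair, sortPair, hi, hj, hlt]⟩
    · refine ⟨(j, i), mem_upperPairs.2 hij, ?_⟩
      simp [pushPair, sortPair, hi, hj, not_lt_of_gt hlt]

lemma prod_crossPairs {β : Type*} [CommMonoid β] {g : Fin M × Fin M → β}
    (hg : ∀ q, g q.swap = g q) (A : Finset (Fin M)) :
    ∏ q ∈ crossPairs A, g q = ∏ q ∈ A ×ˢ Aᶜ, g q := by
  refine prod_nbij' (fun q => if q.1 ∈ A then q else q.swap) sortPair ?_ ?_ ?_ ?_ ?_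
  · intro q hq
    simp only [crossPairs, mem_filter] at hq
    by_cases h1 : q.1 ∈ A <;> simp_all
  · intro q hq
    simp only [mem_product, mem_compl] at hq
    have hne : q.1 ≠ q.2 := fun h => hq.2 (h ▸ hq.1)
    refine mem_filter.2 ⟨sortPair_mem_upperPairs hne, ?_⟩
    rcases sortPair_eq_or_eq_swap q with h | h <;> simp [h, hq.1, hq.2]
  · intro q hq
    simp only [crossPairs, mem_filter] at hq
    by_cases h1 : q.1 ∈ A
    · simp [h1, sortPair_of_mem_upperPairs hq.1]
    · have hlt := mem_upperPairs.1 hq.1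
      simp [h1, sortPair, not_lt_of_gt hlt]
  · intro q hq
    simp only [mem_product, mem_compl] at hq
    rcases sortPair_eq_or_eq_swap q with h | h <;> simp [h, hq.1, hq.2]
  · intro q _
    by_cases h1 : q.1 ∈ A <;> simp [h1, hg]

end Pairs

section Weights

variable {S : Type*} {n M : ℕ}

def pairProb (p : S → S → ℝ) (y : Fin M → S) (q : Fin M × Fin M) : ℝ := p (y q.1) (y q.2)

def connectedEdgeSets (n : ℕ) : Finset (Finset (Fin n × Fin n)) :=
  {E ∈ (upperPairs n).powerset | (graphOf E).Connected}

lemma pConn_eq_sum_edgeWeight (x : Fin n → S) (p : S → S → ℝ) :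
    PConn n x p = ∑ E ∈ connectedEdgeSets n, edgeWeight (upperPairs n) (pairProb p x) E :=
  sum_congr rfl fun _ hE =>
    (edgeWeight_eq_prod_mul_prod _ (mem_powerset.1 (mem_filter.1 hE).1)).symm

lemma pairProb_comp_pushPair {p : S → S → ℝ} (hp : ∀ a b, p a b = p b a) {y : Fin M → S}
    {x : Fin n → S} {e : Fin n → Fin M} (hxy : ∀ i, y (e i) = x i) :
    pairProb p y ∘ pushPair e = pairProb p x := by
  funext q
  rcases sortPair_eq_or_eq_swap (e q.1, e q.2) with h | h <;>
    simp [pairProb, pushPair, h, hxy, hp (x q.1)]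

lemma prod_product_comp_eq {β : Type*} [Fintype S] [DecidableEq S] [CommMonoid β]
    (y : Fin M → S) (h : S → S → β) (B C : Finset (Fin M)) :
    ∏ q ∈ B ×ˢ C, h (y q.1) (y q.2) =
      ∏ s, ∏ t, h s t ^ (#{i ∈ B | y i = s} * #{j ∈ C | y j = t}) := by
  rw [prod_product]
  simp_rw [prod_comp_eq_prod_pow_card_filter C y (h (y _)),
    prod_comp_eq_prod_pow_card_filter B y (fun s => ∏ t, h s t ^ #{j ∈ C | y j = t}),
    ← prod_pow, ← pow_mul, mul_comm]

lemma prod_crossPairs_one_sub_pairProb [Fintype S] [DecidableEq S] {p : S → S → ℝ}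
    (hp : ∀ a b, p a b = p b a) {y : Fin M → S} {A : Finset (Fin M)} {k m : S → ℕ}
    (hy : ∀ s, #{i | y i = s} = m s) (hA : ∀ s, #{i ∈ A | y i = s} = k s) :
    ∏ q ∈ crossPairs A, (1 - pairProb p y q) = ∏ s, ∏ t, (1 - p s t) ^ (k s * (m t - k t)) := by
  have hcompl : ∀ t, #{j ∈ Aᶜ | y j = t} = m t - k t := fun t => by
    have hsdiff : ({j ∈ Aᶜ | y j = t} : Finset (Fin M)) =
        ({j | y j = t} : Finset (Fin M)) \ {j ∈ A | y j = t} := by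
      ext j; simp only [mem_filter, mem_compl, Finset.mem_sdiff, mem_univ, true_and, not_and]; tauto
    rw [hsdiff, card_sdiff_of_subset (filter_subset_filter _ (subset_univ A)), hy, hA]
  rw [prod_crossPairs (fun q => by simp [pairProb, hp (y q.1)]) A]
  simp only [pairProb, prod_product_comp_eq y (fun s t => 1 - p s t), hA, hcompl]

end Weights

section Clusters

variable {n M : ℕ}

lemma graphOf_adj_iff {E : Finset (Fin n × Fin n)} {a b : Fin n} :
    (graphOf E).Adj a b ↔ a ≠ b ∧ ((a, b) ∈ E ∨ (b, a) ∈ E) :=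
  SimpleGraph.fromRel_adj _ a b

lemma mem_of_reachable_graphOf {F : Finset (Fin M × Fin M)} {A : Finset (Fin M)}
    (hF : ∀ q ∈ F, (q.1 ∈ A ↔ q.2 ∈ A)) {u v : Fin M} (huv : (graphOf F).Reachable u v)
    (hu : u ∈ A) : v ∈ A := by
  replace huv := (SimpleGraph.reachable_iff_reflTransGen u v).1 huv
  induction huv with
  | refl => exact hu
  | tail _ hadj ih =>
    rcases (graphOf_adj_iff.1 hadj).2 with h | h
    · exact (hF _ h).1 ih
    · exact (hF _ h).2 ih

def graphOfHomOfPushPair {E : Finset (Fin n × Fin n)} {F : Finset (Fin M × Fin M)}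
    {e : Fin n → Fin M} (he : Function.Injective e) (hEF : ∀ q ∈ E, pushPair e q ∈ F) :
    graphOf E →g graphOf F where
  toFun := e
  map_rel' {a b} hab := by
    have hmem : ∀ {u v}, (u, v) ∈ E → (e u, e v) ∈ F ∨ (e v, e u) ∈ F := fun huv => by
      have := hEF _ huv
      rcases sortPair_eq_or_eq_swap (e _, e _) with h | h <;> rw [pushPair, h] at this
      exacts [Or.inl this, Or.inr this]
    obtain ⟨hne, hab⟩ := graphOf_adj_iff.1 hab
    refine graphOf_adj_iff.2 ⟨he.ne hne, ?_⟩
    rcases hab with h | h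
    exacts [hmem h, (hmem h).symm]

lemma pushPair_mem_innerPairs {e : Fin n → Fin M} (he : Function.Injective e)
    {q : Fin n × Fin n} (hq : q ∈ upperPairs n) : pushPair e q ∈ innerPairs (univ.image e) :=
  image_pushPair_upperPairs he ▸ mem_image_of_mem _ hq

def clusterEdgeSets (e : Fin n → Fin M) : Finset (Finset (Fin M × Fin M)) :=
  (connectedEdgeSets n ×ˢ (outerPairs (univ.image e)).powerset).image
    fun z => z.1.image (pushPair e) ∪ z.2

def edgeSetsWithComponent (v₀ : Fin M) (A : Finset (Fin M)) :
    Finset (Finset (Fin M × Fin M)) :=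
  {F ∈ (upperPairs M).powerset | ∀ j, (graphOf F).Reachable v₀ j ↔ j ∈ A}

lemma clusterEdgeSets_subset {e : Fin n → Fin M} (he : Function.Injective e) {v₀ : Fin M}
    (hv₀ : v₀ ∈ univ.image e) : clusterEdgeSets e ⊆ edgeSetsWithComponent v₀ (univ.image e) := by
  intro F hF
  obtain ⟨⟨E, F'⟩, hz, rfl⟩ := mem_image.1 hF
  obtain ⟨hE, hF'⟩ := mem_product.1 hz
  obtain ⟨hEsub, hconn⟩ := mem_filter.1 hE
  replace hEsub := mem_powerset.1 hEsub
  replace hF' := mem_powerset.1 hF'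
  have hinner : ∀ q ∈ E, pushPair e q ∈ innerPairs (univ.image e) :=
    fun q hq => pushPair_mem_innerPairs he (hEsub hq)
  have hsplit : ∀ q ∈ E.image (pushPair e) ∪ F',
      q ∈ innerPairs (univ.image e) ∨ q ∈ outerPairs (univ.image e) := by
    intro q hq
    rcases mem_union.1 hq with hq | hq
    · obtain ⟨q', hq', rfl⟩ := mem_image.1 hq
      exact Or.inl (hinner q' hq')
    · exact Or.inr (hF' hq)
  refine mem_filter.2 ⟨mem_powerset.2 fun q hq => ?_, fun j => ⟨fun hj => ?_, fun hj => ?_⟩⟩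
  · rcases hsplit q hq with h | h <;> exact (mem_filter.1 h).1
  · refine mem_of_reachable_graphOf (fun q hq => ?_) hj hv₀
    rcases hsplit q hq with h | h <;> simp only [innerPairs, outerPairs, mem_filter] at h <;> tauto
  · obtain ⟨i₀, -, rfl⟩ := mem_image.1 hv₀
    obtain ⟨i, -, rfl⟩ := mem_image.1 hj
    exact (hconn.preconnected i₀ i).map
      (graphOfHomOfPushPair he fun q hq => mem_union_left _ (mem_image_of_mem _ hq))

end Clusters

section ClusterWeights

variable {S : Type*} {n M : ℕ} {e : Fin n → Fin M}

lemma edgeWeight_image_pushPair_union {p : S → S → ℝ} (hp : ∀ a b, p a b = p b a)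
    {y : Fin M → S} {x : Fin n → S} (he : Function.Injective e) (hxy : ∀ i, y (e i) = x i)
    {E : Finset (Fin n × Fin n)} (hE : E ⊆ upperPairs n)
    {F' : Finset (Fin M × Fin M)} (hF' : F' ⊆ outerPairs (univ.image e)) :
    edgeWeight (upperPairs M) (pairProb p y) (E.image (pushPair e) ∪ F') =
      edgeWeight (upperPairs n) (pairProb p x) E *
        (∏ q ∈ crossPairs (univ.image e), (1 - pairProb p y q)) *
        edgeWeight (outerPairs (univ.image e)) (pairProb p y) F' := by
  set A := univ.image e
  have himage : E.image (pushPair e) ⊆ innerPairs A :=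
    image_pushPair_upperPairs he ▸ image_subset_image hE
  have hnot_inner : ∀ q ∈ innerPairs A, q ∉ F' := fun q hq hq' => by
    have := hF' hq'
    simp only [innerPairs, outerPairs, mem_filter] at hq this
    exact this.2.1 hq.2.1
  have hnot_image : ∀ q ∉ innerPairs A, q ∉ E.image (pushPair e) := fun q hq h => hq (himage h)
  have hinner : edgeWeight (innerPairs A) (pairProb p y) (E.image (pushPair e) ∪ F') =
      edgeWeight (upperPairs n) (pairProb p x) E := by
    rw [edgeWeight_congr (F' := E.image (pushPair e)) _ fun q hq => by simp [hnot_inner q hq],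
      ← image_pushPair_upperPairs he, edgeWeight_image (pushPair_injOn he) hE,
      pairProb_comp_pushPair hp hxy]
  have hcross : edgeWeight (crossPairs A) (pairProb p y) (E.image (pushPair e) ∪ F') =
      ∏ q ∈ crossPairs A, (1 - pairProb p y q) := by
    refine prod_congr rfl fun q hq => if_neg fun h => ?_
    have hq_inner : q ∉ innerPairs A := by
      simp only [innerPairs, crossPairs, mem_filter] at hq ⊢; tauto
    rcases mem_union.1 h with h | h
    · exact hnot_image q hq_inner h
    · have := hF' h
      simp only [crossPairs, outerPairs, mem_filter] at hq this; tauto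
  have houter : edgeWeight (outerPairs A) (pairProb p y) (E.image (pushPair e) ∪ F') =
      edgeWeight (outerPairs A) (pairProb p y) F' :=
    edgeWeight_congr _ fun q hq => by
      have hq_inner : q ∉ innerPairs A := by
        simp only [innerPairs, outerPairs, mem_filter] at hq ⊢; tauto
      simp [hnot_image q hq_inner]
  rw [edgeWeight, prod_upperPairs_eq A, ← edgeWeight, ← edgeWeight, ← edgeWeight, hinner, hcross,
    houter]

lemma injOn_image_pushPair_union (he : Function.Injective e) :
    Set.InjOn (fun z : Finset (Fin n × Fin n) × Finset (Fin M × Fin M) =>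
      z.1.image (pushPair e) ∪ z.2)
      ↑(connectedEdgeSets n ×ˢ (outerPairs (univ.image e)).powerset) := by
  rintro ⟨E₁, F₁⟩ h₁ ⟨E₂, F₂⟩ h₂ heq
  simp only [mem_coe, mem_product, connectedEdgeSets, mem_filter,
    mem_powerset] at h₁ h₂ heq
  have hinter : ∀ {E F'}, E ⊆ upperPairs n → F' ⊆ outerPairs (univ.image e) →
      (E.image (pushPair e) ∪ F') ∩ innerPairs (univ.image e) = E.image (pushPair e) ∧
      (E.image (pushPair e) ∪ F') ∩ outerPairs (univ.image e) = F' := by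
    intro E F' hE hF'
    have himage := image_pushPair_upperPairs he ▸ image_subset_image hE
    have hdisj : Disjoint (innerPairs (univ.image e)) (outerPairs (univ.image e)) :=
      disjoint_filter.2 fun _ _ => by tauto
    rw [union_inter_distrib_right, union_inter_distrib_right, inter_eq_left.2 himage,
      inter_eq_left.2 hF', disjoint_iff_inter_eq_empty.1 (hdisj.mono_right hF').symm,
      disjoint_iff_inter_eq_empty.1 (hdisj.mono_left himage), union_empty, empty_union]
    exact ⟨rfl, rfl⟩
  have hE : E₁.image (pushPair e) = E₂.image (pushPair e) := by
    rw [← (hinter h₁.1.1 h₁.2).1, ← (hinter h₂.1.1 h₂.2).1, heq]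
  have hF : F₁ = F₂ := by rw [← (hinter h₁.1.1 h₁.2).2, ← (hinter h₂.1.1 h₂.2).2, heq]
  refine Prod.ext (coe_injective (((pushPair_injOn he).image_eq_image_iff h₁.1.1 h₂.1.1).1 ?_)) hF
  exact_mod_cast hE

lemma sum_edgeWeight_clusterEdgeSets {p : S → S → ℝ} (hp : ∀ a b, p a b = p b a)
    {y : Fin M → S} {x : Fin n → S} (he : Function.Injective e) (hxy : ∀ i, y (e i) = x i) :
    ∑ F ∈ clusterEdgeSets e, edgeWeight (upperPairs M) (pairProb p y) F =
      PConn n x p * ∏ q ∈ crossPairs (univ.image e), (1 - pairProb p y q) := by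
  rw [clusterEdgeSets, sum_image (injOn_image_pushPair_union he), sum_product,
    pConn_eq_sum_edgeWeight, sum_mul]
  refine sum_congr rfl fun E hE => ?_
  rw [sum_congr rfl fun F' hF' => edgeWeight_image_pushPair_union hp he hxy
    (mem_powerset.1 (mem_filter.1 hE).1) (mem_powerset.1 hF'), ← mul_sum,
    sum_edgeWeight_powerset, mul_one]

lemma pConn_mul_prod_crossPairs_le {p : S → S → ℝ} (hp : ∀ a b, p a b = p b a)
    (hp0 : ∀ a b, 0 ≤ p a b) (hp1 : ∀ a b, p a b ≤ 1) {y : Fin M → S} {x : Fin n → S}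
    (he : Function.Injective e) (hxy : ∀ i, y (e i) = x i) {v₀ : Fin M}
    (hv₀ : v₀ ∈ univ.image e) :
    PConn n x p * ∏ q ∈ crossPairs (univ.image e), (1 - pairProb p y q) ≤
      ∑ F ∈ edgeSetsWithComponent v₀ (univ.image e),
        edgeWeight (upperPairs M) (pairProb p y) F := by
  rw [← sum_edgeWeight_clusterEdgeSets hp he hxy]
  exact sum_le_sum_of_subset_of_nonneg (clusterEdgeSets_subset he hv₀) fun F _ _ =>
    edgeWeight_nonneg (fun _ => hp0 _ _) (fun _ => hp1 _ _) _ F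

lemma sum_sum_edgeWeight_edgeSetsWithComponent_le_one {f : Fin M × Fin M → ℝ}
    (hf0 : ∀ q, 0 ≤ f q) (hf1 : ∀ q, f q ≤ 1) (v₀ : Fin M) (𝒜 : Finset (Finset (Fin M))) :
    ∑ A ∈ 𝒜, ∑ F ∈ edgeSetsWithComponent v₀ A, edgeWeight (upperPairs M) f F ≤ 1 := by
  have hdisj : (𝒜 : Set (Finset (Fin M))).PairwiseDisjoint (edgeSetsWithComponent v₀) := by
    intro A _ B _ hAB
    refine disjoint_left.2 fun F hA hB => hAB ?_
    ext j
    rw [← (mem_filter.1 hA).2 j, (mem_filter.1 hB).2 j]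
  rw [← sum_biUnion hdisj, ← sum_edgeWeight_powerset (upperPairs M) f]
  refine sum_le_sum_of_subset_of_nonneg (fun F hF => ?_) fun F _ _ => edgeWeight_nonneg hf0 hf1 _ F
  obtain ⟨A, -, hF⟩ := mem_biUnion.1 hF
  exact (mem_filter.1 hF).1

end ClusterWeights

lemma card_filter_erase_fiber {ι S : Type*} [DecidableEq ι] [DecidableEq S] {B : Finset ι} {v : ι}
    (hv : v ∈ B) (f : ι → S) (s : S) :
    #{i ∈ B.erase v | f i = s} = #{i ∈ B | f i = s} - if s = f v then 1 else 0 := by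
  rw [filter_erase]
  split_ifs with hs
  · exact card_erase_of_mem (mem_filter.2 ⟨hv, hs.symm⟩)
  · exact congrArg card (erase_eq_of_notMem fun h => hs (mem_filter.1 h).2.symm)

section Counting

variable {ι S : Type*} [DecidableEq ι] [Fintype S] [DecidableEq S]

lemma card_filter_powerset_card_fiber (T : Finset ι) (f : ι → S) (c : S → ℕ) :
    #{B ∈ T.powerset | ∀ s, #{i ∈ B | f i = s} = c s} =
      ∏ s, (#{i ∈ T | f i = s}).choose (c s) := by
  simp_rw [← card_powersetCard, ← Fintype.card_piFinset]
  have hfiber : ∀ g ∈ Fintype.piFinset fun s => {i ∈ T | f i = s}.powersetCard (c s),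
      ∀ s, {i ∈ univ.biUnion g | f i = s} = g s := by
    intro g hg s
    simp only [Fintype.mem_piFinset, mem_powersetCard] at hg
    ext i
    simp only [mem_filter, mem_biUnion, mem_univ, true_and]
    refine ⟨fun ⟨⟨t, hi⟩, hfi⟩ => ?_, fun hi => ⟨⟨s, hi⟩, (mem_filter.1 ((hg s).1 hi)).2⟩⟩
    obtain rfl : t = s := (mem_filter.1 ((hg t).1 hi)).2 ▸ hfi
    exact hi
  refine card_nbij' (fun B s => {i ∈ B | f i = s}) (fun g => univ.biUnion g) ?_ ?_ ?_ ?_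
  · intro B hB
    rw [mem_coe, mem_filter, mem_powerset] at hB
    exact Fintype.mem_piFinset.2 fun s => mem_powersetCard.2 ⟨filter_subset_filter _ hB.1, hB.2 s⟩
  · intro g hg
    refine mem_filter.2 ⟨mem_powerset.2 fun i hi => ?_, fun s => ?_⟩
    · obtain ⟨s, -, hi⟩ := mem_biUnion.1 hi
      exact (mem_filter.1 ((mem_powersetCard.1 (Fintype.mem_piFinset.1 hg s)).1 hi)).1
    · rw [hfiber g hg s]
      exact (mem_powersetCard.1 (Fintype.mem_piFinset.1 hg s)).2
  · intro B _
    exact biUnion_filter_eq_of_maps_to fun _ _ => mem_univ _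
  · intro g hg
    exact funext (hfiber g hg)

lemma card_filter_mem_card_fiber {M : ℕ} {y : Fin M → S} {m k : S → ℕ}
    (hy : ∀ s, #{i | y i = s} = m s) {v₀ : Fin M} {r : S} (hv₀ : y v₀ = r) (hk : 1 ≤ k r) :
    #{A : Finset (Fin M) | v₀ ∈ A ∧ ∀ s, #{i ∈ A | y i = s} = k s} =
      ∏ s, (m s - if s = r then 1 else 0).choose (k s - if s = r then 1 else 0) := by
  subst hv₀
  have hT : ∀ s, #{i ∈ univ.erase v₀ | y i = s} = m s - if s = y v₀ then 1 else 0 :=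
    fun s => by rw [card_filter_erase_fiber (mem_univ v₀), ← hy]
  simp_rw [← hT]
  rw [← card_filter_powerset_card_fiber]
  refine card_nbij' (fun A => A.erase v₀) (insert v₀) ?_ ?_ ?_ ?_
  · intro A hA
    simp only [mem_coe, mem_filter, mem_univ, true_and] at hA ⊢
    refine ⟨mem_powerset.2 (erase_subset_erase _ (subset_univ A)), fun s => ?_⟩
    rw [card_filter_erase_fiber hA.1, hA.2]
  · intro B hB
    simp only [mem_coe, mem_filter, mem_powerset, mem_univ, true_and] at hB ⊢
    have hv₀B : v₀ ∉ B := fun h => (mem_erase.1 (hB.1 h)).1 rfl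
    refine ⟨mem_insert_self _ _, fun s => ?_⟩
    have herase := card_filter_erase_fiber (mem_insert_self v₀ B) y s
    rw [erase_insert hv₀B, hB.2] at herase
    have hpos : (if s = y v₀ then 1 else 0) ≤ #{i ∈ insert v₀ B | y i = s} := by
      split_ifs with hs
      · exact card_pos.2 ⟨v₀, mem_filter.2 ⟨mem_insert_self _ _, hs.symm⟩⟩
      · exact Nat.zero_le _
    split_ifs at herase hpos with hs <;> [subst hs; skip] <;> omega
  · intro A hA
    exact insert_erase (mem_filter.1 hA).2.1
  · intro B hB
    exact erase_insert fun h => (mem_erase.1 ((mem_powerset.1 (mem_filter.1 hB).1) h)).1 rfl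

end Counting

lemma exists_injective_image_eq_of_card_fiber {S : Type*} [DecidableEq S] {n M : ℕ}
    {x : Fin n → S} {y : Fin M → S} {A : Finset (Fin M)}
    (h : ∀ c, #{i | x i = c} = #{v ∈ A | y v = c}) :
    ∃ e : Fin n → Fin M, Function.Injective e ∧ (∀ i, y (e i) = x i) ∧ univ.image e = A := by
  have hcard : ∀ c, Fintype.card {i // x i = c} = Fintype.card {v : A // y v = c} := fun c => by
    rw [Fintype.card_subtype, Fintype.card_subtype, h c, univ_eq_attach,
      filter_attach (fun v => y v = c) A, card_map, card_attach]
  let e₀ : Fin n ≃ A := Equiv.ofFiberEquiv fun c => Fintype.equivOfCardEq (hcard c)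
  refine ⟨fun i => e₀ i, fun a b hab => e₀.injective (Subtype.ext hab),
    Equiv.ofFiberEquiv_map (g := fun v : A => y v) _, ?_⟩
  ext v
  simp only [mem_image, mem_univ, true_and]
  exact ⟨fun ⟨i, hi⟩ => hi ▸ (e₀ i).2, fun hv => ⟨e₀.symm ⟨v, hv⟩, by simp⟩⟩

theorem cluster_expansion_term_le_one_general
    {S : Type*} [Fintype S] [DecidableEq S]
    (N : ℕ)
    (κN : S → S → ℝ) (hκNsym : ∀ r s, κN r s = κN s r)
    (hκN0 : ∀ r s, 0 ≤ κN r s) (hκNle : ∀ r s, κN r s ≤ N)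
    (r : S) (k : S → ℕ) (hkr : 1 ≤ k r) (m : S → ℕ) (hkm : ∀ s, k s ≤ m s) :
    pN κN N k *
        (∏ s : S, ((m s - if s = r then 1 else 0).choose (k s - if s = r then 1 else 0) : ℝ)) *
        ∏ s : S, ∏ t : S, (1 - κN s t / N) ^ (k s * (m t - k t)) ≤ 1 := by
  set p : S → S → ℝ := fun s t => κN s t / N
  have hp0 : ∀ s t, 0 ≤ p s t := fun s t => div_nonneg (hκN0 s t) N.cast_nonneg
  have hp1 : ∀ s t, p s t ≤ 1 := fun s t => div_le_one_of_le₀ (hκNle s t) N.cast_nonneg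
  have hpsym : ∀ s t, p s t = p t s := fun s t => by simp only [p, hκNsym s t]
  have hpN : pN κN N k = PConn _ (compatVec k) p :=
    congrArg _ (funext₂ fun s t => min_eq_right (hp1 s t))
  set y := compatVec m
  obtain ⟨v₀, hv₀⟩ : ({i | y i = r} : Finset _).Nonempty := by
    rw [← card_pos, card_filter_compatVec_eq]
    exact hkr.trans (hkm r)
  replace hv₀ := (mem_filter.1 hv₀).2
  set 𝒜 : Finset (Finset (Fin _)) := {A | v₀ ∈ A ∧ ∀ s, #{i ∈ A | y i = s} = k s}
  calc _ = ∑ A ∈ 𝒜, PConn _ (compatVec k) p * ∏ s, ∏ t, (1 - p s t) ^ (k s * (m t - k t)) := by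
        rw [sum_const, nsmul_eq_mul, hpN, ← Nat.cast_prod,
          ← card_filter_mem_card_fiber (card_filter_compatVec_eq m) hv₀ hkr]
        ring
    _ ≤ ∑ A ∈ 𝒜, ∑ F ∈ edgeSetsWithComponent v₀ A, edgeWeight _ (pairProb p y) F := by
        refine sum_le_sum fun A hA => ?_
        obtain ⟨hv₀A, hAk⟩ := (mem_filter.1 hA).2
        obtain ⟨e, he, hxy, rfl⟩ := exists_injective_image_eq_of_card_fiber
          (x := compatVec k) (y := y) fun c => by rw [card_filter_compatVec_eq, hAk]
        rw [← prod_crossPairs_one_sub_pairProb hpsym (card_filter_compatVec_eq m) hAk]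
        exact pConn_mul_prod_crossPairs_le hpsym hp0 hp1 he hxy hv₀A
    _ ≤ 1 :=
        sum_sum_edgeWeight_edgeSetsWithComponent_le_one (fun _ => hp0 _ _) (fun _ => hp1 _ _) v₀ 𝒜

/-- a single term of the expansion identity is at most one. -/
theorem cluster_expansion_term_le_one
    {S : Type*} [Fintype S] [DecidableEq S] [Nonempty S]
    (N : ℕ) (hN : 1 ≤ N)
    (κN : S → S → ℝ) (hκNsym : ∀ r s, κN r s = κN s r)
    (hκN0 : ∀ r s, 0 ≤ κN r s) (hκNle : ∀ r s, κN r s ≤ N)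
    (r : S) (k : S → ℕ) (hkr : 1 ≤ k r) (m : S → ℕ) (hkm : ∀ s, k s ≤ m s) :
    pN κN N k *
        (∏ s : S, ((m s - if s = r then 1 else 0).choose (k s - if s = r then 1 else 0) : ℝ)) *
        ∏ s : S, ∏ t : S, (1 - κN s t / N) ^ (k s * (m t - k t)) ≤ 1 :=
  cluster_expansion_term_le_one_general N κN hκNsym hκN0 hκNle r k hkr m hkm
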